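/- Let P be a probability distribution supported on [0,1] and let Λ be a positive integer with α_λ := 2^{-λ}. If E_{Z∼P}[Z] > α for some α ∈ [2·2^{-Λ}, 1], then there exists λ ∈ {1,...,Λ} such that P(Z > 2^{-λ}) > α/(4Λ·2^{-λ}). -/

import Mathlib

/-!
Dyadic layer-cake bound: for `z ∈ [0,1]`,
`z ≤ 2^{-Λ} + ∑_{λ=1}^{Λ} 2^{1-λ} · 1[z > 2^{-λ}]`, so taking expectations,
`E[Z] ≤ 2^{-Λ} + ∑_{λ=1}^{Λ} 2^{1-λ} P(Z > 2^{-λ})`. If every tail were at most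
`α / (4Λ 2^{-λ})`, each summand would be at most `α / (2Λ)`, and with `2^{-Λ} ≤ α/2`
the mean would be at most `α`.
-/

open MeasureTheory

noncomputable def dyadicUpper (Λ : ℕ) (z : ℝ) : ℝ :=
  ((2:ℝ) ^ Λ)⁻¹ +
    ∑ l ∈ Finset.Icc 1 Λ, (Set.Ioi ((2:ℝ) ^ l)⁻¹).indicator (fun _ => 2 * ((2:ℝ) ^ l)⁻¹) z

lemma le_dyadicUpper {z : ℝ} (hz : z ≤ 1) (Λ : ℕ) : z ≤ dyadicUpper Λ z := by
  induction Λ with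
  | zero => simpa [dyadicUpper] using hz
  | succ Λ ih =>
    have hsum_nonneg : 0 ≤ ∑ l ∈ Finset.Icc 1 Λ,
        (Set.Ioi ((2:ℝ) ^ l)⁻¹).indicator (fun _ => 2 * ((2:ℝ) ^ l)⁻¹) z :=
      Finset.sum_nonneg fun l _ => Set.indicator_nonneg (fun _ _ => by positivity) z
    unfold dyadicUpper at ih ⊢
    rw [Finset.sum_Icc_succ_top (by omega)]
    by_cases hlarge : ((2:ℝ) ^ (Λ + 1))⁻¹ < z
    · rw [Set.indicator_of_mem (show z ∈ Set.Ioi _ from hlarge), pow_succ, mul_inv]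
      linarith [show (0:ℝ) ≤ ((2:ℝ) ^ Λ)⁻¹ by positivity]
    · rw [Set.indicator_of_notMem (show z ∉ Set.Ioi _ from hlarge)]
      linarith

lemma integral_dyadicUpper (P : Measure ℝ) [IsProbabilityMeasure P] (Λ : ℕ) :
    ∫ z, dyadicUpper Λ z ∂P =
      ((2:ℝ) ^ Λ)⁻¹ + ∑ l ∈ Finset.Icc 1 Λ, 2 * ((2:ℝ) ^ l)⁻¹ * P.real (Set.Ioi ((2:ℝ) ^ l)⁻¹) := by
  have hint : ∀ l : ℕ, Integrable ((Set.Ioi ((2:ℝ) ^ l)⁻¹).indicator fun _ => 2 * ((2:ℝ) ^ l)⁻¹) P :=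
    fun l => (integrable_const _).indicator measurableSet_Ioi
  unfold dyadicUpper
  rw [integral_add (integrable_const _) (integrable_finsetSum _ fun l _ => hint l),
    integral_const, probReal_univ, one_smul, integral_finsetSum _ fun l _ => hint l]
  congr 1
  refine Finset.sum_congr rfl fun l _ => ?_
  rw [integral_indicator_const _ measurableSet_Ioi, smul_eq_mul, mul_comm]

lemma integral_le_dyadic_tail_sum (P : Measure ℝ) [IsProbabilityMeasure P]
    (hsupp : ∀ᵐ z ∂P, z ∈ Set.Icc (0:ℝ) 1) (Λ : ℕ) :
    ∫ z, z ∂P ≤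
      ((2:ℝ) ^ Λ)⁻¹ + ∑ l ∈ Finset.Icc 1 Λ, 2 * ((2:ℝ) ^ l)⁻¹ * P.real (Set.Ioi ((2:ℝ) ^ l)⁻¹) := by
  rw [← integral_dyadicUpper]
  refine integral_mono_of_nonneg (hsupp.mono fun z hz => hz.1) ?_
    (hsupp.mono fun z hz => le_dyadicUpper hz.2 Λ)
  exact (integrable_const _).add
    (integrable_finsetSum _ fun l _ => (integrable_const _).indicator measurableSet_Ioi)

theorem stmt0 (P : Measure ℝ) [IsProbabilityMeasure P]
    (hsupp : P (Set.Icc (0:ℝ) 1)ᶜ = 0)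
    (Λ : ℕ) (hΛ : 1 ≤ Λ) (α : ℝ)
    (hα : α ∈ Set.Icc (2 * ((2:ℝ) ^ Λ)⁻¹) 1)
    (hE : α < ∫ z, z ∂P) :
    ∃ l ∈ Finset.Icc 1 Λ,
      α / (4 * Λ * ((2:ℝ) ^ l)⁻¹) < (P {z : ℝ | ((2:ℝ) ^ l)⁻¹ < z}).toReal := by
  by_contra! hsmall
  have hΛpos : (0:ℝ) < Λ := by exact_mod_cast hΛ
  have hterm : ∀ l ∈ Finset.Icc 1 Λ,
      2 * ((2:ℝ) ^ l)⁻¹ * P.real (Set.Ioi ((2:ℝ) ^ l)⁻¹) ≤ α / (2 * Λ) := fun l hl =>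
    calc 2 * ((2:ℝ) ^ l)⁻¹ * P.real (Set.Ioi ((2:ℝ) ^ l)⁻¹)
        ≤ 2 * ((2:ℝ) ^ l)⁻¹ * (α / (4 * Λ * ((2:ℝ) ^ l)⁻¹)) := by gcongr; exact hsmall l hl
      _ = α / (2 * Λ) := by field_simp; ring
  have htails : ∑ l ∈ Finset.Icc 1 Λ, 2 * ((2:ℝ) ^ l)⁻¹ * P.real (Set.Ioi ((2:ℝ) ^ l)⁻¹)
      ≤ α / 2 :=
    calc _ ≤ (Finset.Icc 1 Λ).card • (α / (2 * Λ)) := Finset.sum_le_card_nsmul _ _ _ hterm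
      _ = α / 2 := by rw [Nat.card_Icc, Nat.add_sub_cancel, nsmul_eq_mul]; field_simp
  have hmean := integral_le_dyadic_tail_sum P (ae_iff.mpr hsupp) Λ
  linarith [hα.1]
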